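/- (Proposition 2.9(ii), first part.) Let 𝕂 be a field, r and s nonzero in 𝕂 with rs⁻¹ not a root of unity, φ a nonzero element of 𝕂, m ≥ 0 an integer, and φ′ = φ(rs⁻¹)^{−m}. Then in the Verma module M(φ, φ′) the subspace N = Span_𝕂{v_j : j ≥ m+1} is a U_{r,s}(sl_2)-submodule, N is isomorphic as a U_{r,s}(sl_2)-module to the Verma module M(φ(rs⁻¹)^{−(m+1)}, φ′(rs⁻¹)^{m+1}), and N is the unique maximal proper submodule of M(φ, φ′). -/

import Mathlib

/-- Generators of `U_{r,s}(sl_2)`: `e`, `f`, `ω`, `ω⁻¹`, `ω′`, `ω′⁻¹`. -/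
inductive UGen : Type
  | e | f | w | winv | w' | w'inv

open FreeAlgebra in
/-- The defining relations of `U_{r,s}(sl_2)`. -/
inductive URel (𝕂 : Type) [Field 𝕂] (r s : 𝕂) :
    FreeAlgebra 𝕂 UGen → FreeAlgebra 𝕂 UGen → Prop
  | winv_right : URel 𝕂 r s (ι 𝕂 .w * ι 𝕂 .winv) 1
  | winv_left : URel 𝕂 r s (ι 𝕂 .winv * ι 𝕂 .w) 1
  | w'inv_right : URel 𝕂 r s (ι 𝕂 .w' * ι 𝕂 .w'inv) 1
  | w'inv_left : URel 𝕂 r s (ι 𝕂 .w'inv * ι 𝕂 .w') 1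
  | ww' : URel 𝕂 r s (ι 𝕂 .w * ι 𝕂 .w') (ι 𝕂 .w' * ι 𝕂 .w)
  | we : URel 𝕂 r s (ι 𝕂 .w * ι 𝕂 .e) ((r * s⁻¹) • (ι 𝕂 .e * ι 𝕂 .w))
  | wf : URel 𝕂 r s (ι 𝕂 .w * ι 𝕂 .f) ((r⁻¹ * s) • (ι 𝕂 .f * ι 𝕂 .w))
  | w'e : URel 𝕂 r s (ι 𝕂 .w' * ι 𝕂 .e) ((r⁻¹ * s) • (ι 𝕂 .e * ι 𝕂 .w'))
  | w'f : URel 𝕂 r s (ι 𝕂 .w' * ι 𝕂 .f) ((r * s⁻¹) • (ι 𝕂 .f * ι 𝕂 .w'))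
  | ef : URel 𝕂 r s (ι 𝕂 .e * ι 𝕂 .f - ι 𝕂 .f * ι 𝕂 .e)
      ((r - s)⁻¹ • (ι 𝕂 .w - ι 𝕂 .w'))

/-- The two-parameter quantum group `U_{r,s}(sl_2)`: the quotient of the free
algebra on the six generators by the defining relations. -/
abbrev Ursl2 (𝕂 : Type) [Field 𝕂] (r s : 𝕂) : Type := RingQuot (URel 𝕂 r s)

/-- The image of a generator in `U_{r,s}(sl_2)`. -/
def UGen.toU {𝕂 : Type} [Field 𝕂] (r s : 𝕂) (x : UGen) : Ursl2 𝕂 r s :=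
  RingQuot.mkAlgHom 𝕂 (URel 𝕂 r s) (FreeAlgebra.ι 𝕂 x)

/-- The quantum integer `[m] = (rᵐ − sᵐ)/(r − s)`. -/
def qInt {𝕂 : Type} [Field 𝕂] (r s : 𝕂) (m : ℕ) : 𝕂 := (r ^ m - s ^ m) / (r - s)

/-!
When `φ′ = φ(rs⁻¹)^{−m}`, the `e`-coefficient `(r^{−j}φ − s^{−j}φ′)/(r − s)` of `e.v_{j+1}`
vanishes exactly at `j = m`, so `v_{m+1}` is a highest weight vector of weight
`φ(rs⁻¹)^{−(m+1)}`. Hence `u_j ↦ [m+1+j choose j] v_{m+1+j}` is a morphism of modules from the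
second Verma module onto `N`; being a morphism only has to be checked on the generators of
`U_{r,s}(sl_2)`, where it reduces to identities between two-parameter quantum integers.

Since `rs⁻¹` is not a root of unity, the `ω`-weights `φ(rs⁻¹)^{−j}` of the `v_j` are pairwise
distinct, so a submodule contains every basis vector occurring in one of its elements. A
submodule not contained in `N` thus contains some `v_j` with `j ≤ m`, hence `v_0` (apply `e`,
whose coefficients below `m` are nonzero), hence everything (apply `f`).
-/

namespace Module.Basis

variable {K V ι : Type*} [Field K] [AddCommGroup V] [Module K V]

theorem repr_apply_eq_mul_of_eigen (b : Module.Basis ι K V) {T : Module.End K V} {μ : ι → K}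
    (hT : ∀ i, T (b i) = μ i • b i) (x : V) (i : ι) : b.repr (T x) i = μ i * b.repr x i := by
  classical
  have : (b.coord i).comp T = μ i • b.coord i := b.ext fun j => by
    by_cases hji : j = i <;> simp [hT, hji]
  exact LinearMap.congr_fun this x

open Polynomial in
/-- `∏ (T - μ k)` over the other indices `k` in the support of `x` maps `x` to a nonzero
multiple of `b i`. -/
theorem mem_of_repr_ne_zero_of_le_comap (b : Module.Basis ι K V) {T : Module.End K V}
    {μ : ι → K} (hμ : Function.Injective μ) (hT : ∀ i, T (b i) = μ i • b i)
    {P : Submodule K V} (hP : P ≤ P.comap T) {x : V} (hx : x ∈ P) {i : ι}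
    (hi : b.repr x i ≠ 0) : b i ∈ P := by
  classical
  set p : K[X] := ∏ k ∈ (b.repr x).support.erase i, (X - C (μ k))
  have hp : ∀ j, aeval T p (b j) = p.eval (μ j) • b j := fun j =>
    Module.End.aeval_apply_of_mem_apply_eq_smul (hT j)
  have hpi : p.eval (μ i) ≠ 0 := by
    simp only [p, eval_prod, eval_sub, eval_X, eval_C]
    exact Finset.prod_ne_zero_iff.2 fun k hk =>
      sub_ne_zero.2 fun h => (Finset.mem_erase.1 hk).1 (hμ h).symm
  have hpx : aeval T p x = (p.eval (μ i) * b.repr x i) • b i := by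
    refine b.ext_elem fun j => ?_
    rw [b.repr_apply_eq_mul_of_eigen hp, map_smul, b.repr_self, Finsupp.smul_apply,
      Finsupp.single_apply, smul_eq_mul]
    by_cases hij : i = j
    · subst hij
      simp
    rw [if_neg hij, mul_zero]
    by_cases hxj : b.repr x j = 0
    · rw [hxj, mul_zero]
    · rw [eval_prod, Finset.prod_eq_zero (Finset.mem_erase.2
        ⟨Ne.symm hij, Finsupp.mem_support_iff.2 hxj⟩) (by simp), zero_mul]
  have := aeval_apply_smul_mem_of_le_comap hx p T hP
  rw [hpx] at this
  rwa [P.smul_mem_iff (mul_ne_zero hpi hi)] at this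

end Module.Basis

theorem Module.Basis.constr_comp_eq_of_eigen {R M M₂ ι : Type*} [CommSemiring R]
    [AddCommMonoid M] [Module R M] [AddCommMonoid M₂] [Module R M₂]
    (b : Module.Basis ι R M₂) (w : ι → M) {A₂ : Module.End R M₂} {A : Module.End R M}
    {μ : ι → R} (hA₂ : ∀ i, A₂ (b i) = μ i • b i) (hA : ∀ i, A (w i) = μ i • w i) :
    b.constr R w ∘ₗ A₂ = A ∘ₗ b.constr R w :=
  b.ext fun i => by simp [hA₂, hA]

section Intertwiners

variable {R A M M₂ : Type*} [CommSemiring R] [Semiring A] [Algebra R A]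
  [AddCommMonoid M] [Module R M] [AddCommMonoid M₂] [Module R M₂]

def intertwiners (ρ : A →ₐ[R] Module.End R M) (ρ₂ : A →ₐ[R] Module.End R M₂)
    (F : M₂ →ₗ[R] M) : Subalgebra R A where
  carrier := {a | F ∘ₗ ρ₂ a = ρ a ∘ₗ F}
  mul_mem' {a b} (ha : _ = _) (hb : _ = _) := by
    show F ∘ₗ ρ₂ (a * b) = ρ (a * b) ∘ₗ F
    simp only [map_mul, Module.End.mul_eq_comp]
    rw [← LinearMap.comp_assoc, ha, LinearMap.comp_assoc, hb, LinearMap.comp_assoc]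
  add_mem' {a b} (ha : _ = _) (hb : _ = _) := by
    show F ∘ₗ ρ₂ (a + b) = ρ (a + b) ∘ₗ F
    simp only [map_add, LinearMap.comp_add, LinearMap.add_comp, ha, hb]
  algebraMap_mem' c := by
    ext
    simp [Module.algebraMap_end_apply]

variable {ρ : A →ₐ[R] Module.End R M} {ρ₂ : A →ₐ[R] Module.End R M₂} {F : M₂ →ₗ[R] M}

theorem mem_intertwiners_iff {a : A} : a ∈ intertwiners ρ ρ₂ F ↔ F ∘ₗ ρ₂ a = ρ a ∘ₗ F :=
  Iff.rfl

theorem mem_intertwiners_of_mul_eq_one {a b : A} (ha : a ∈ intertwiners ρ ρ₂ F)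
    (hab : a * b = 1) (hba : b * a = 1) : b ∈ intertwiners ρ ρ₂ F := by
  have hab' : ρ₂ a ∘ₗ ρ₂ b = LinearMap.id := by
    rw [← Module.End.mul_eq_comp, ← map_mul, hab, map_one, Module.End.one_eq_id]
  have hba' : ρ b ∘ₗ ρ a = LinearMap.id := by
    rw [← Module.End.mul_eq_comp, ← map_mul, hba, map_one, Module.End.one_eq_id]
  rw [mem_intertwiners_iff] at ha ⊢
  calc F ∘ₗ ρ₂ b = (ρ b ∘ₗ ρ a) ∘ₗ F ∘ₗ ρ₂ b := by rw [hba', LinearMap.id_comp]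
    _ = ρ b ∘ₗ (F ∘ₗ ρ₂ a) ∘ₗ ρ₂ b := by rw [ha]; rfl
    _ = ρ b ∘ₗ F := by rw [LinearMap.comp_assoc, hab', LinearMap.comp_id]

end Intertwiners

namespace Ursl2

variable {𝕂 : Type} [Field 𝕂] {r s : 𝕂}

theorem adjoin_range_toU : Algebra.adjoin 𝕂 (Set.range (UGen.toU r s)) = ⊤ := by
  rw [show UGen.toU r s = RingQuot.mkAlgHom 𝕂 (URel 𝕂 r s) ∘ FreeAlgebra.ι 𝕂 from rfl,
    Set.range_comp, Algebra.adjoin_image, FreeAlgebra.adjoin_range_ι, Algebra.map_top,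
    AlgHom.range_eq_top]
  exact RingQuot.mkAlgHom_surjective 𝕂 (URel 𝕂 r s)

theorem eq_top_of_forall_toU_mem {S : Subalgebra 𝕂 (Ursl2 𝕂 r s)}
    (h : ∀ g, UGen.toU r s g ∈ S) : S = ⊤ :=
  top_le_iff.1 <|
    adjoin_range_toU (r := r) (s := s) ▸ Algebra.adjoin_le (Set.range_subset_iff.2 h)

theorem toU_w_mul_toU_winv : UGen.toU r s .w * UGen.toU r s .winv = 1 := by
  simpa only [UGen.toU, map_mul, map_one] using
    RingQuot.mkAlgHom_rel 𝕂 (URel.winv_right (r := r) (s := s))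

theorem toU_winv_mul_toU_w : UGen.toU r s .winv * UGen.toU r s .w = 1 := by
  simpa only [UGen.toU, map_mul, map_one] using
    RingQuot.mkAlgHom_rel 𝕂 (URel.winv_left (r := r) (s := s))

theorem toU_w'_mul_toU_w'inv : UGen.toU r s .w' * UGen.toU r s .w'inv = 1 := by
  simpa only [UGen.toU, map_mul, map_one] using
    RingQuot.mkAlgHom_rel 𝕂 (URel.w'inv_right (r := r) (s := s))

theorem toU_w'inv_mul_toU_w' : UGen.toU r s .w'inv * UGen.toU r s .w' = 1 := by
  simpa only [UGen.toU, map_mul, map_one] using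
    RingQuot.mkAlgHom_rel 𝕂 (URel.w'inv_left (r := r) (s := s))

end Ursl2

section Scalars

variable {𝕂 : Type} [Field 𝕂] {r s : 𝕂}

theorem pow_ne_pow_of_not_root (hs : s ≠ 0) (hroot : ∀ k : ℤ, (r * s⁻¹) ^ k = 1 → k = 0)
    {n : ℕ} (hn : n ≠ 0) : r ^ n ≠ s ^ n := by
  intro h
  have : (r * s⁻¹) ^ (n : ℤ) = 1 := by
    rw [zpow_natCast, mul_pow, h, inv_pow, mul_inv_cancel₀ (pow_ne_zero _ hs)]
  exact hn (by exact_mod_cast hroot n this)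

theorem sub_ne_zero_of_not_root (hs : s ≠ 0) (hroot : ∀ k : ℤ, (r * s⁻¹) ^ k = 1 → k = 0) :
    r - s ≠ 0 := by
  simpa using sub_ne_zero.2 (pow_ne_pow_of_not_root hs hroot one_ne_zero)

theorem qInt_ne_zero (hs : s ≠ 0) (hroot : ∀ k : ℤ, (r * s⁻¹) ^ k = 1 → k = 0)
    {n : ℕ} (hn : n ≠ 0) : qInt r s n ≠ 0 :=
  div_ne_zero (sub_ne_zero.2 (pow_ne_pow_of_not_root hs hroot hn))
    (sub_ne_zero_of_not_root hs hroot)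

theorem zpow_injective_of_not_root (hr : r ≠ 0) (hs : s ≠ 0)
    (hroot : ∀ k : ℤ, (r * s⁻¹) ^ k = 1 → k = 0) :
    Function.Injective fun k : ℤ => (r * s⁻¹) ^ k := by
  intro a b (hab : (r * s⁻¹) ^ a = (r * s⁻¹) ^ b)
  have hq : r * s⁻¹ ≠ 0 := mul_ne_zero hr (inv_ne_zero hs)
  have := hroot (a - b) (by rw [zpow_sub₀ hq, hab, div_self (zpow_ne_zero _ hq)])
  omega

/-- `e.v_{j+1} = vermaECoeff r s φ φ' j • v_j` in `M(φ, φ′)`. -/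
def vermaECoeff (r s φ φ' : 𝕂) (j : ℕ) : 𝕂 :=
  (r ^ (-(j : ℤ)) * φ - s ^ (-(j : ℤ)) * φ') / (r - s)

theorem vermaECoeff_eq (hr : r ≠ 0) (hs : s ≠ 0) (φ : 𝕂) (m j : ℕ) :
    vermaECoeff r s φ (φ * (r * s⁻¹) ^ (-(m : ℤ))) j =
      φ * r ^ (-(j : ℤ)) * (1 - (r * s⁻¹) ^ ((j : ℤ) - m)) / (r - s) := by
  unfold vermaECoeff
  rw [zpow_sub₀ (mul_ne_zero hr (inv_ne_zero hs))]
  simp only [zpow_neg, zpow_natCast, mul_pow, inv_pow]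
  field_simp

theorem vermaECoeff_eq_zero_iff (hr : r ≠ 0) (hs : s ≠ 0)
    (hroot : ∀ k : ℤ, (r * s⁻¹) ^ k = 1 → k = 0) {φ : 𝕂} (hφ : φ ≠ 0) {m j : ℕ} :
    vermaECoeff r s φ (φ * (r * s⁻¹) ^ (-(m : ℤ))) j = 0 ↔ j = m := by
  rw [vermaECoeff_eq hr hs]
  constructor
  · intro h
    have hpow : (r * s⁻¹) ^ ((j : ℤ) - m) = 1 := by
      rcases mul_eq_zero.1 ((div_eq_zero_iff.1 h).resolve_right
        (sub_ne_zero_of_not_root hs hroot)) with h | h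
      · exact absurd h (mul_ne_zero hφ (zpow_ne_zero _ hr))
      · exact (sub_eq_zero.1 h).symm
    have := hroot _ hpow
    omega
  · rintro rfl
    simp

/-- The two-parameter `q`-binomial coefficient `[m+1+j choose j]`. -/
def embCoeff (r s : 𝕂) (m : ℕ) : ℕ → 𝕂
  | 0 => 1
  | j + 1 => embCoeff r s m j * qInt r s (m + j + 2) / qInt r s (j + 1)

theorem embCoeff_ne_zero (hs : s ≠ 0) (hroot : ∀ k : ℤ, (r * s⁻¹) ^ k = 1 → k = 0)
    (m j : ℕ) : embCoeff r s m j ≠ 0 := by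
  induction j with
  | zero => exact one_ne_zero
  | succ j ih =>
    exact div_ne_zero (mul_ne_zero ih (qInt_ne_zero hs hroot (by omega)))
      (qInt_ne_zero hs hroot (by omega))

theorem qInt_mul_embCoeff_succ (hs : s ≠ 0) (hroot : ∀ k : ℤ, (r * s⁻¹) ^ k = 1 → k = 0)
    (m j : ℕ) :
    qInt r s (j + 1) * embCoeff r s m (j + 1) = embCoeff r s m j * qInt r s (m + j + 2) := by
  rw [embCoeff, mul_div_cancel₀ _ (qInt_ne_zero hs hroot (Nat.succ_ne_zero j))]

theorem qInt_mul_vermaECoeff (hr : r ≠ 0) (hs : s ≠ 0) (hrs : r - s ≠ 0) (φ : 𝕂) (m j : ℕ) :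
    qInt r s (m + j + 2) * vermaECoeff r s φ (φ * (r * s⁻¹) ^ (-(m : ℤ))) (m + 1 + j) =
      qInt r s (j + 1) * vermaECoeff r s (φ * (r * s⁻¹) ^ (-((m : ℤ) + 1)))
        (φ * (r * s⁻¹) ^ (-(m : ℤ)) * (r * s⁻¹) ^ ((m : ℤ) + 1)) j := by
  have h : ((m : ℤ) + 1) = ((m + 1 : ℕ) : ℤ) := by push_cast; ring
  rw [h]
  simp only [vermaECoeff, qInt, zpow_neg, zpow_natCast, mul_pow, inv_pow]
  field_simp
  ring

end Scalars

section Verma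

variable {𝕂 : Type} [Field 𝕂] {r s : 𝕂} {M M₂ : Type} [AddCommGroup M] [Module 𝕂 M]
  [AddCommGroup M₂] [Module 𝕂 M₂]

theorem mem_span_range_shift_iff (v : Module.Basis ℕ 𝕂 M) (m : ℕ) {x : M} :
    x ∈ Submodule.span 𝕂 (Set.range fun j => v (m + 1 + j)) ↔ ∀ j ≤ m, v.repr x j = 0 := by
  have : (Set.range fun j => v (m + 1 + j)) = v '' Set.Ioi m := by
    ext y
    simp only [Set.mem_range, Set.mem_image, Set.mem_Ioi]
    exact ⟨fun ⟨j, hj⟩ => ⟨m + 1 + j, by omega, hj⟩,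
      fun ⟨i, hi, hy⟩ => ⟨i - (m + 1), by rw [← hy]; congr 1; omega⟩⟩
  rw [this, v.mem_span_image, Set.subset_def]
  refine forall_congr' fun j => ?_
  rw [Finset.mem_coe, Finsupp.mem_support_iff, Set.mem_Ioi, not_imp_comm, not_lt]

noncomputable def vermaEmbedding (r s : 𝕂) (m : ℕ) (u : Module.Basis ℕ 𝕂 M₂)
    (v : Module.Basis ℕ 𝕂 M) : M₂ →ₗ[𝕂] M :=
  u.constr 𝕂 fun j => embCoeff r s m j • v (m + 1 + j)

variable (u : Module.Basis ℕ 𝕂 M₂) (v : Module.Basis ℕ 𝕂 M) (m : ℕ)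

theorem vermaEmbedding_basis (j : ℕ) :
    vermaEmbedding r s m u v (u j) = embCoeff r s m j • v (m + 1 + j) :=
  u.constr_basis 𝕂 _ j

theorem injective_vermaEmbedding (hs : s ≠ 0) (hroot : ∀ k : ℤ, (r * s⁻¹) ^ k = 1 → k = 0) :
    Function.Injective (vermaEmbedding r s m u v) :=
  u.injective_constr_of_linearIndependent
    ((v.linearIndependent.comp _ (add_right_injective (m + 1))).units_smul
      fun j => Units.mk0 _ (embCoeff_ne_zero hs hroot m j))

theorem range_vermaEmbedding (hs : s ≠ 0) (hroot : ∀ k : ℤ, (r * s⁻¹) ^ k = 1 → k = 0) :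
    LinearMap.range (vermaEmbedding r s m u v) =
      Submodule.span 𝕂 (Set.range fun j => v (m + 1 + j)) := by
  rw [vermaEmbedding, u.constr_range]
  apply le_antisymm <;> rw [Submodule.span_le] <;> rintro _ ⟨j, rfl⟩
  · exact Submodule.smul_mem _ _ (Submodule.subset_span ⟨j, rfl⟩)
  · show v (m + 1 + j) ∈ _
    rw [← inv_smul_smul₀ (embCoeff_ne_zero hs hroot m j) (v (m + 1 + j))]
    exact Submodule.smul_mem _ _ (Submodule.subset_span ⟨j, rfl⟩)

variable {u v m} {ρ : Ursl2 𝕂 r s →ₐ[𝕂] Module.End 𝕂 M}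
  {ρ₂ : Ursl2 𝕂 r s →ₐ[𝕂] Module.End 𝕂 M₂} {φ φ' : 𝕂}

theorem toU_w_mem_intertwiners (hr : r ≠ 0) (hs : s ≠ 0)
    (hw : ∀ j : ℕ, ρ (UGen.toU r s .w) (v j) = (φ * (r * s⁻¹) ^ (-(j : ℤ))) • v j)
    (hw₂ : ∀ j : ℕ, ρ₂ (UGen.toU r s .w) (u j) =
      (φ * (r * s⁻¹) ^ (-((m : ℤ) + 1)) * (r * s⁻¹) ^ (-(j : ℤ))) • u j) :
    UGen.toU r s .w ∈ intertwiners ρ ρ₂ (vermaEmbedding r s m u v) :=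
  u.constr_comp_eq_of_eigen _ hw₂ fun j => by
    rw [map_smul, hw, smul_comm, mul_assoc, ← zpow_add₀ (mul_ne_zero hr (inv_ne_zero hs)),
      show -((m : ℤ) + 1) + -(j : ℤ) = -((m + 1 + j : ℕ) : ℤ) by omega]

theorem toU_w'_mem_intertwiners (hr : r ≠ 0) (hs : s ≠ 0)
    (hw' : ∀ j : ℕ, ρ (UGen.toU r s .w') (v j) = (φ' * (r * s⁻¹) ^ (j : ℤ)) • v j)
    (hw'₂ : ∀ j : ℕ, ρ₂ (UGen.toU r s .w') (u j) =
      (φ' * (r * s⁻¹) ^ ((m : ℤ) + 1) * (r * s⁻¹) ^ (j : ℤ)) • u j) :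
    UGen.toU r s .w' ∈ intertwiners ρ ρ₂ (vermaEmbedding r s m u v) :=
  u.constr_comp_eq_of_eigen _ hw'₂ fun j => by
    rw [map_smul, hw', smul_comm, mul_assoc, ← zpow_add₀ (mul_ne_zero hr (inv_ne_zero hs)),
      show (m : ℤ) + 1 + j = ((m + 1 + j : ℕ) : ℤ) by omega]

theorem toU_f_mem_intertwiners (hs : s ≠ 0) (hroot : ∀ k : ℤ, (r * s⁻¹) ^ k = 1 → k = 0)
    (hf : ∀ j : ℕ, ρ (UGen.toU r s .f) (v j) = qInt r s (j + 1) • v (j + 1))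
    (hf₂ : ∀ j : ℕ, ρ₂ (UGen.toU r s .f) (u j) = qInt r s (j + 1) • u (j + 1)) :
    UGen.toU r s .f ∈ intertwiners ρ ρ₂ (vermaEmbedding r s m u v) :=
  u.ext fun j => by
    simp only [LinearMap.comp_apply, hf₂, map_smul, vermaEmbedding_basis, hf, smul_smul,
      qInt_mul_embCoeff_succ hs hroot]
    rw [show m + j + 2 = m + 1 + j + 1 by omega, ← add_assoc]

theorem toU_e_mem_intertwiners (hr : r ≠ 0) (hs : s ≠ 0)
    (hroot : ∀ k : ℤ, (r * s⁻¹) ^ k = 1 → k = 0) (hφ : φ ≠ 0)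
    (he : ∀ j : ℕ, ρ (UGen.toU r s .e) (v (j + 1)) =
      vermaECoeff r s φ (φ * (r * s⁻¹) ^ (-(m : ℤ))) j • v j)
    (he0₂ : ρ₂ (UGen.toU r s .e) (u 0) = 0)
    (he₂ : ∀ j : ℕ, ρ₂ (UGen.toU r s .e) (u (j + 1)) =
      vermaECoeff r s (φ * (r * s⁻¹) ^ (-((m : ℤ) + 1)))
        (φ * (r * s⁻¹) ^ (-(m : ℤ)) * (r * s⁻¹) ^ ((m : ℤ) + 1)) j • u j) :
    UGen.toU r s .e ∈ intertwiners ρ ρ₂ (vermaEmbedding r s m u v) :=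
  u.ext fun j => by
    cases j with
    | zero =>
      simp only [LinearMap.comp_apply, he0₂, map_zero, vermaEmbedding_basis, map_smul]
      rw [add_zero, he, (vermaECoeff_eq_zero_iff hr hs hroot hφ).2 rfl, zero_smul, smul_zero]
    | succ j =>
      simp only [LinearMap.comp_apply, he₂, map_smul, vermaEmbedding_basis, smul_smul]
      rw [← add_assoc, he, smul_smul]
      congr 1
      apply mul_left_cancel₀ (qInt_ne_zero hs hroot j.succ_ne_zero)
      linear_combination
        (-vermaECoeff r s φ (φ * (r * s⁻¹) ^ (-(m : ℤ))) (m + 1 + j)) *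
            qInt_mul_embCoeff_succ hs hroot m j -
          embCoeff r s m j *
            qInt_mul_vermaECoeff hr hs (sub_ne_zero_of_not_root hs hroot) φ m j

theorem intertwiners_vermaEmbedding_eq_top (hr : r ≠ 0) (hs : s ≠ 0)
    (hroot : ∀ k : ℤ, (r * s⁻¹) ^ k = 1 → k = 0) (hφ : φ ≠ 0)
    (hw : ∀ j : ℕ, ρ (UGen.toU r s .w) (v j) = (φ * (r * s⁻¹) ^ (-(j : ℤ))) • v j)
    (hw' : ∀ j : ℕ, ρ (UGen.toU r s .w') (v j) =
      (φ * (r * s⁻¹) ^ (-(m : ℤ)) * (r * s⁻¹) ^ (j : ℤ)) • v j)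
    (hf : ∀ j : ℕ, ρ (UGen.toU r s .f) (v j) = qInt r s (j + 1) • v (j + 1))
    (he : ∀ j : ℕ, ρ (UGen.toU r s .e) (v (j + 1)) =
      vermaECoeff r s φ (φ * (r * s⁻¹) ^ (-(m : ℤ))) j • v j)
    (hw₂ : ∀ j : ℕ, ρ₂ (UGen.toU r s .w) (u j) =
      (φ * (r * s⁻¹) ^ (-((m : ℤ) + 1)) * (r * s⁻¹) ^ (-(j : ℤ))) • u j)
    (hw'₂ : ∀ j : ℕ, ρ₂ (UGen.toU r s .w') (u j) =
      (φ * (r * s⁻¹) ^ (-(m : ℤ)) * (r * s⁻¹) ^ ((m : ℤ) + 1) * (r * s⁻¹) ^ (j : ℤ)) • u j)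
    (hf₂ : ∀ j : ℕ, ρ₂ (UGen.toU r s .f) (u j) = qInt r s (j + 1) • u (j + 1))
    (he0₂ : ρ₂ (UGen.toU r s .e) (u 0) = 0)
    (he₂ : ∀ j : ℕ, ρ₂ (UGen.toU r s .e) (u (j + 1)) =
      vermaECoeff r s (φ * (r * s⁻¹) ^ (-((m : ℤ) + 1)))
        (φ * (r * s⁻¹) ^ (-(m : ℤ)) * (r * s⁻¹) ^ ((m : ℤ) + 1)) j • u j) :
    intertwiners ρ ρ₂ (vermaEmbedding r s m u v) = ⊤ := by
  have h_w := toU_w_mem_intertwiners hr hs hw hw₂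
  have h_w' := toU_w'_mem_intertwiners hr hs hw' hw'₂
  refine Ursl2.eq_top_of_forall_toU_mem fun g => ?_
  cases g
  · exact toU_e_mem_intertwiners hr hs hroot hφ he he0₂ he₂
  · exact toU_f_mem_intertwiners hs hroot hf hf₂
  · exact h_w
  · exact mem_intertwiners_of_mul_eq_one h_w Ursl2.toU_w_mul_toU_winv Ursl2.toU_winv_mul_toU_w
  · exact h_w'
  · exact mem_intertwiners_of_mul_eq_one h_w' Ursl2.toU_w'_mul_toU_w'inv
      Ursl2.toU_w'inv_mul_toU_w'

theorem basis_zero_mem_of_basis_mem (hr : r ≠ 0) (hs : s ≠ 0)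
    (hroot : ∀ k : ℤ, (r * s⁻¹) ^ k = 1 → k = 0) (hφ : φ ≠ 0)
    (he : ∀ j : ℕ, ρ (UGen.toU r s .e) (v (j + 1)) =
      vermaECoeff r s φ (φ * (r * s⁻¹) ^ (-(m : ℤ))) j • v j)
    {Q : Submodule 𝕂 M} (hQ : Q ≤ Q.comap (ρ (UGen.toU r s .e))) {j : ℕ} (hj : j ≤ m)
    (hvj : v j ∈ Q) : v 0 ∈ Q := by
  induction j with
  | zero => exact hvj
  | succ j ih =>
    have hcoeff : vermaECoeff r s φ (φ * (r * s⁻¹) ^ (-(m : ℤ))) j ≠ 0 := by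
      rw [Ne, vermaECoeff_eq_zero_iff hr hs hroot hφ]
      omega
    have := hQ hvj
    rw [Submodule.mem_comap, he, Q.smul_mem_iff hcoeff] at this
    exact ih (by omega) this

theorem eq_top_of_basis_zero_mem (hs : s ≠ 0) (hroot : ∀ k : ℤ, (r * s⁻¹) ^ k = 1 → k = 0)
    (hf : ∀ j : ℕ, ρ (UGen.toU r s .f) (v j) = qInt r s (j + 1) • v (j + 1))
    {Q : Submodule 𝕂 M} (hQ : Q ≤ Q.comap (ρ (UGen.toU r s .f))) (hv0 : v 0 ∈ Q) : Q = ⊤ := by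
  have hv : ∀ j, v j ∈ Q := by
    intro j
    induction j with
    | zero => exact hv0
    | succ j ih =>
      have := hQ ih
      rwa [Submodule.mem_comap, hf,
        Q.smul_mem_iff (qInt_ne_zero hs hroot j.succ_ne_zero)] at this
  rw [eq_top_iff, ← v.span_eq, Submodule.span_le]
  rintro _ ⟨j, rfl⟩
  exact hv j

theorem le_span_range_shift_of_ne_top (hr : r ≠ 0) (hs : s ≠ 0)
    (hroot : ∀ k : ℤ, (r * s⁻¹) ^ k = 1 → k = 0) (hφ : φ ≠ 0)
    (hw : ∀ j : ℕ, ρ (UGen.toU r s .w) (v j) = (φ * (r * s⁻¹) ^ (-(j : ℤ))) • v j)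
    (hf : ∀ j : ℕ, ρ (UGen.toU r s .f) (v j) = qInt r s (j + 1) • v (j + 1))
    (he : ∀ j : ℕ, ρ (UGen.toU r s .e) (v (j + 1)) =
      vermaECoeff r s φ (φ * (r * s⁻¹) ^ (-(m : ℤ))) j • v j)
    {Q : Submodule 𝕂 M} (hQ : ∀ a, Q ≤ Q.comap (ρ a)) (hQtop : Q ≠ ⊤) :
    Q ≤ Submodule.span 𝕂 (Set.range fun j => v (m + 1 + j)) := by
  intro x hx
  rw [mem_span_range_shift_iff]
  intro j hj
  by_contra hxj
  have hweight : Function.Injective fun j : ℕ => φ * (r * s⁻¹) ^ (-(j : ℤ)) := fun a b h => by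
    have := zpow_injective_of_not_root hr hs hroot (mul_left_cancel₀ hφ h)
    omega
  have hvj := v.mem_of_repr_ne_zero_of_le_comap hweight hw (hQ _) hx hxj
  exact hQtop (eq_top_of_basis_zero_mem hs hroot hf (hQ _)
    (basis_zero_mem_of_basis_mem hr hs hroot hφ he (hQ _) hj hvj))

end Verma

theorem stmt11_general {𝕂 : Type} [Field 𝕂] (r s : 𝕂) (hr : r ≠ 0) (hs : s ≠ 0)
    (hroot : ∀ k : ℤ, (r * s⁻¹) ^ k = 1 → k = 0)
    (φ φ' : 𝕂) (hφ : φ ≠ 0) (m : ℕ) (hφ' : φ' = φ * (r * s⁻¹) ^ (-(m : ℤ)))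
    -- a realization of the Verma module `M(φ, φ′)`
    (M : Type) [AddCommGroup M] [Module 𝕂 M] (v : Module.Basis ℕ 𝕂 M)
    (ρ : Ursl2 𝕂 r s →ₐ[𝕂] Module.End 𝕂 M)
    (hw : ∀ j : ℕ, ρ (UGen.toU r s .w) (v j) = (φ * (r * s⁻¹) ^ (-(j : ℤ))) • v j)
    (hw' : ∀ j : ℕ, ρ (UGen.toU r s .w') (v j) = (φ' * (r * s⁻¹) ^ (j : ℤ)) • v j)
    (hf : ∀ j : ℕ, ρ (UGen.toU r s .f) (v j) = qInt r s (j + 1) • v (j + 1))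
    (he : ∀ j : ℕ, ρ (UGen.toU r s .e) (v (j + 1)) =
      ((r ^ (-(j : ℤ)) * φ - s ^ (-(j : ℤ)) * φ') / (r - s)) • v j)
    -- a realization of the Verma module `M(φ(rs⁻¹)^{−(m+1)}, φ′(rs⁻¹)^{m+1})`
    (M₂ : Type) [AddCommGroup M₂] [Module 𝕂 M₂] (u : Module.Basis ℕ 𝕂 M₂)
    (ρ₂ : Ursl2 𝕂 r s →ₐ[𝕂] Module.End 𝕂 M₂)
    (hw₂ : ∀ j : ℕ, ρ₂ (UGen.toU r s .w) (u j) =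
      (φ * (r * s⁻¹) ^ (-((m : ℤ) + 1)) * (r * s⁻¹) ^ (-(j : ℤ))) • u j)
    (hw'₂ : ∀ j : ℕ, ρ₂ (UGen.toU r s .w') (u j) =
      (φ' * (r * s⁻¹) ^ ((m : ℤ) + 1) * (r * s⁻¹) ^ (j : ℤ)) • u j)
    (hf₂ : ∀ j : ℕ, ρ₂ (UGen.toU r s .f) (u j) = qInt r s (j + 1) • u (j + 1))
    (he0₂ : ρ₂ (UGen.toU r s .e) (u 0) = 0)
    (he₂ : ∀ j : ℕ, ρ₂ (UGen.toU r s .e) (u (j + 1)) =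
      ((r ^ (-(j : ℤ)) * (φ * (r * s⁻¹) ^ (-((m : ℤ) + 1))) -
        s ^ (-(j : ℤ)) * (φ' * (r * s⁻¹) ^ ((m : ℤ) + 1))) / (r - s)) • u j) :
    letI : Module (Ursl2 𝕂 r s) M := Module.compHom M ρ.toRingHom
    letI : Module (Ursl2 𝕂 r s) M₂ := Module.compHom M₂ ρ₂.toRingHom
    ∃ N : Submodule (Ursl2 𝕂 r s) M,
      (N : Set M) = ↑(Submodule.span 𝕂 (Set.range fun j : ℕ => v (m + 1 + j))) ∧
      Nonempty (N ≃ₗ[Ursl2 𝕂 r s] M₂) ∧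
      N ≠ ⊤ ∧ ∀ P : Submodule (Ursl2 𝕂 r s) M, P ≠ ⊤ → P ≤ N := by
  subst hφ'
  let _ : Module (Ursl2 𝕂 r s) M := Module.compHom M ρ.toRingHom
  let _ : Module (Ursl2 𝕂 r s) M₂ := Module.compHom M₂ ρ₂.toRingHom
  set F := vermaEmbedding r s m u v
  have hF : ∀ a, F ∘ₗ ρ₂ a = ρ a ∘ₗ F := Algebra.eq_top_iff.1
    (intertwiners_vermaEmbedding_eq_top hr hs hroot hφ hw hw' hf he hw₂ hw'₂ hf₂ he0₂ he₂)
  let Φ : M₂ →ₗ[Ursl2 𝕂 r s] M :=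
    { F with map_smul' := fun a y => LinearMap.congr_fun (hF a) y }
  have hN : (LinearMap.range Φ : Set M) =
      Submodule.span 𝕂 (Set.range fun j => v (m + 1 + j)) := by
    rw [LinearMap.coe_range, ← range_vermaEmbedding u v m hs hroot, LinearMap.coe_range]
    rfl
  have : IsScalarTower 𝕂 (Ursl2 𝕂 r s) M := ⟨fun c a x => by
    show ρ (c • a) x = c • ρ a x
    rw [map_smul]
    rfl⟩
  refine ⟨LinearMap.range Φ, hN,
    ⟨(LinearEquiv.ofInjective Φ (injective_vermaEmbedding u v m hs hroot)).symm⟩,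
    fun htop => ?_, fun P hP x hx => ?_⟩
  · have hv0 : v 0 ∈ (LinearMap.range Φ : Set M) := htop ▸ trivial
    rw [hN, SetLike.mem_coe, mem_span_range_shift_iff] at hv0
    simpa using hv0 0 m.zero_le
  · rw [← SetLike.mem_coe, hN]
    exact le_span_range_shift_of_ne_top hr hs hroot hφ hw hf he (Q := P.restrictScalars 𝕂)
      (fun a _ hy => P.smul_mem a hy) (by rwa [Ne, Submodule.restrictScalars_eq_top_iff]) hx

/-- Proposition 2.9(ii), first part: if `φ′ = φ(rs⁻¹)^{−m}` for some integer `m ≥ 0`,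
then in the Verma module `M(φ, φ′)` (realized on a space `M` with basis `(v_j)_{j∈ℕ}`)
the span `N` of `{v_j : j ≥ m+1}` is a `U_{r,s}(sl_2)`-submodule, `N` is isomorphic as
a `U_{r,s}(sl_2)`-module to the Verma module `M(φ(rs⁻¹)^{−(m+1)}, φ′(rs⁻¹)^{m+1})`
(realized on a space `M₂` with basis `(u_j)_{j∈ℕ}`), and `N` is the unique maximal
proper submodule of `M(φ, φ′)`. -/
theorem stmt11 {𝕂 : Type} [Field 𝕂] (r s : 𝕂) (hr : r ≠ 0) (hs : s ≠ 0)
    (hroot : ∀ k : ℤ, (r * s⁻¹) ^ k = 1 → k = 0)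
    (φ φ' : 𝕂) (hφ : φ ≠ 0) (m : ℕ) (hφ' : φ' = φ * (r * s⁻¹) ^ (-(m : ℤ)))
    -- a realization of the Verma module `M(φ, φ′)`
    (M : Type) [AddCommGroup M] [Module 𝕂 M] (v : Module.Basis ℕ 𝕂 M)
    (ρ : Ursl2 𝕂 r s →ₐ[𝕂] Module.End 𝕂 M)
    (hw : ∀ j : ℕ, ρ (UGen.toU r s .w) (v j) = (φ * (r * s⁻¹) ^ (-(j : ℤ))) • v j)
    (hw' : ∀ j : ℕ, ρ (UGen.toU r s .w') (v j) = (φ' * (r * s⁻¹) ^ (j : ℤ)) • v j)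
    (hf : ∀ j : ℕ, ρ (UGen.toU r s .f) (v j) = qInt r s (j + 1) • v (j + 1))
    (he0 : ρ (UGen.toU r s .e) (v 0) = 0)
    (he : ∀ j : ℕ, ρ (UGen.toU r s .e) (v (j + 1)) =
      ((r ^ (-(j : ℤ)) * φ - s ^ (-(j : ℤ)) * φ') / (r - s)) • v j)
    -- a realization of the Verma module `M(φ(rs⁻¹)^{−(m+1)}, φ′(rs⁻¹)^{m+1})`
    (M₂ : Type) [AddCommGroup M₂] [Module 𝕂 M₂] (u : Module.Basis ℕ 𝕂 M₂)
    (ρ₂ : Ursl2 𝕂 r s →ₐ[𝕂] Module.End 𝕂 M₂)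
    (hw₂ : ∀ j : ℕ, ρ₂ (UGen.toU r s .w) (u j) =
      (φ * (r * s⁻¹) ^ (-((m : ℤ) + 1)) * (r * s⁻¹) ^ (-(j : ℤ))) • u j)
    (hw'₂ : ∀ j : ℕ, ρ₂ (UGen.toU r s .w') (u j) =
      (φ' * (r * s⁻¹) ^ ((m : ℤ) + 1) * (r * s⁻¹) ^ (j : ℤ)) • u j)
    (hf₂ : ∀ j : ℕ, ρ₂ (UGen.toU r s .f) (u j) = qInt r s (j + 1) • u (j + 1))
    (he0₂ : ρ₂ (UGen.toU r s .e) (u 0) = 0)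
    (he₂ : ∀ j : ℕ, ρ₂ (UGen.toU r s .e) (u (j + 1)) =
      ((r ^ (-(j : ℤ)) * (φ * (r * s⁻¹) ^ (-((m : ℤ) + 1))) -
        s ^ (-(j : ℤ)) * (φ' * (r * s⁻¹) ^ ((m : ℤ) + 1))) / (r - s)) • u j) :
    letI : Module (Ursl2 𝕂 r s) M := Module.compHom M ρ.toRingHom
    letI : Module (Ursl2 𝕂 r s) M₂ := Module.compHom M₂ ρ₂.toRingHom
    ∃ N : Submodule (Ursl2 𝕂 r s) M,
      (N : Set M) = ↑(Submodule.span 𝕂 (Set.range fun j : ℕ => v (m + 1 + j))) ∧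
      Nonempty (N ≃ₗ[Ursl2 𝕂 r s] M₂) ∧
      N ≠ ⊤ ∧ ∀ P : Submodule (Ursl2 𝕂 r s) M, P ≠ ⊤ → P ≤ N :=
  stmt11_general r s hr hs hroot φ φ' hφ m hφ' M v ρ hw hw' hf he M₂ u ρ₂ hw₂ hw'₂ hf₂ he0₂ he₂
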